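/- Let G be a connected simple graph on n vertices (n even, n ≥ 2) with chromatic number χ(G) = 2. Then ABC(G) ≤ (n/2)·sqrt(n-2), with equality iff G is the complete bipartite graph K_{n/2,n/2}. -/

import Mathlib

/-!
In a bipartite graph on `n` vertices the neighbourhoods of adjacent `u, v` lie in the two opposite
colour classes, so `d(u) + d(v) ≤ n`, and for such degrees
`√((a + b - 2) / (a b)) ≤ √(n - 2) · (1/a + 1/b) / 2`. Summed over the edges, the right-hand sides
give `√(n - 2) / 2` times the number of non-isolated vertices, which is `n` for a connected graph.
Equality forces `d(u) = d(v) = n / 2` on every edge; an `n/2`-regular bipartite graph on `n`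
vertices has both colour classes of size `n / 2`, each vertex adjacent to the whole opposite class.
-/

/-- The degree of a vertex. -/
noncomputable def deg {V : Type*} (G : SimpleGraph V) (v : V) : ℕ :=
  Nat.card {w | G.Adj v w}

open scoped Classical in
/-- The atom-bond connectivity index:
`ABC(G) = ∑_{uv ∈ E(G)} sqrt((d(u)+d(v)-2)/(d(u)d(v)))`,
computed as half the sum over ordered adjacent pairs. -/
noncomputable def ABC {V : Type*} [Fintype V] (G : SimpleGraph V) : ℝ :=
  (∑ u : V, ∑ v : V, if G.Adj u v then
    Real.sqrt (((deg G u : ℝ) + (deg G v : ℝ) - 2) / ((deg G u : ℝ) * (deg G v : ℝ)))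
  else 0) / 2

/-- The complete bipartite graph on `Fin n` with parts `{0, …, m-1}` and `{m, …, n-1}`. -/
def compBipartite (n m : ℕ) : SimpleGraph (Fin n) where
  Adj u v := (u.val < m) ≠ (v.val < m)
  symm := by constructor; intro u v h; exact h.symm
  loopless := by constructor; intro u h; exact h rfl

open Finset SimpleGraph
open scoped Classical

lemma deg_eq_degree {V : Type*} [Fintype V] (G : SimpleGraph V) (v : V) :
    deg G v = G.degree v := by
  rw [← card_neighborSet_eq_degree]
  exact Nat.card_eq_fintype_card

noncomputable def abcWeight (a b : ℝ) : ℝ := √((a + b - 2) / (a * b))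

section Weight

variable {a b N : ℝ}

/-- The square of the right-hand side exceeds that of the left by a sum of two nonnegative terms,
so equality forces both `a + b = N` and (since `a = b = 1` whenever `a + b = 2`) `a = b`. -/
lemma sqrt_mul_half_inv_add_inv (ha : 0 < a) (hb : 0 < b) (hN : 2 ≤ N) :
    √(N - 2) * ((a⁻¹ + b⁻¹) / 2) =
      √((a + b - 2) / (a * b) +
        ((N - (a + b)) * (a + b) ^ 2 + (a + b - 2) * (a - b) ^ 2) / (4 * (a * b) ^ 2)) := by
  have hsq : (a + b - 2) / (a * b) +
      ((N - (a + b)) * (a + b) ^ 2 + (a + b - 2) * (a - b) ^ 2) / (4 * (a * b) ^ 2) =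
      (N - 2) * ((a⁻¹ + b⁻¹) / 2) ^ 2 := by
    field_simp
    ring
  rw [hsq, Real.sqrt_mul (by linarith), Real.sqrt_sq (by positivity)]

lemma abcWeight_le (ha : 1 ≤ a) (hb : 1 ≤ b) (hN : a + b ≤ N) :
    abcWeight a b ≤ √(N - 2) * ((a⁻¹ + b⁻¹) / 2) := by
  rw [sqrt_mul_half_inv_add_inv (by linarith) (by linarith) (by linarith)]
  refine Real.sqrt_le_sqrt (le_add_of_nonneg_right ?_)
  have : 0 ≤ a + b - 2 := by linarith
  have : 0 ≤ N - (a + b) := by linarith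
  positivity

lemma abcWeight_eq_iff (ha : 1 ≤ a) (hb : 1 ≤ b) (hN : a + b ≤ N) :
    abcWeight a b = √(N - 2) * ((a⁻¹ + b⁻¹) / 2) ↔ a = b ∧ a + b = N := by
  rw [sqrt_mul_half_inv_add_inv (by linarith) (by linarith) (by linarith), abcWeight]
  have hab : 0 ≤ a + b - 2 := by linarith
  have hgap : 0 ≤ N - (a + b) := by linarith
  rw [Real.sqrt_inj (by positivity) (by positivity), left_eq_add,
    div_eq_zero_iff, or_iff_left (by positivity),
    add_eq_zero_iff_of_nonneg (by positivity) (by positivity), mul_eq_zero, mul_eq_zero,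
    pow_eq_zero_iff two_ne_zero, pow_eq_zero_iff two_ne_zero, or_iff_left (by positivity)]
  constructor
  · rintro ⟨hN, h | h⟩ <;> constructor <;> linarith
  · rintro ⟨h1, h2⟩
    exact ⟨by linarith, .inr (by linarith)⟩

end Weight

namespace SimpleGraph

variable {V : Type*} [Fintype V] (G : SimpleGraph V)

lemma ABC_eq_sum_abcWeight :
    ABC G = (∑ u, ∑ v, if G.Adj u v then abcWeight (G.degree u) (G.degree v) else 0) / 2 := by
  simp only [ABC, abcWeight, deg_eq_degree]

variable {G}

lemma sum_sum_ite_adj_eq_iff {f g : V → V → ℝ} (hfg : ∀ u v, G.Adj u v → f u v ≤ g u v) :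
    (∑ u, ∑ v, if G.Adj u v then f u v else 0) = (∑ u, ∑ v, if G.Adj u v then g u v else 0) ↔
      ∀ u v, G.Adj u v → f u v = g u v := by
  have hle : ∀ u v, (if G.Adj u v then f u v else 0) ≤ if G.Adj u v then g u v else 0 :=
    fun u v => by split_ifs with h; exacts [hfg u v h, le_rfl]
  rw [sum_eq_sum_iff_of_le fun u _ => sum_le_sum fun v _ => hle u v]
  simp only [sum_eq_sum_iff_of_le fun v _ => hle _ v, mem_univ, forall_const]
  refine forall₂_congr fun u v => ?_
  by_cases h : G.Adj u v <;> simp [h]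

lemma sum_sum_ite_adj_inv_degree (hpos : ∀ v, 0 < G.degree v) :
    ∑ u, ∑ v, (if G.Adj u v then (G.degree u : ℝ)⁻¹ else 0) = Fintype.card V := by
  have hrow : ∀ u, ∑ v, (if G.Adj u v then (G.degree u : ℝ)⁻¹ else 0) = 1 := fun u => by
    rw [← sum_filter, sum_const, ← neighborFinset_eq_filter, card_neighborFinset_eq_degree,
      nsmul_eq_mul, mul_inv_cancel₀ (by exact_mod_cast (hpos u).ne')]
  simp [hrow]

lemma sum_sum_ite_adj_avg_inv_degree (hpos : ∀ v, 0 < G.degree v) :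
    ∑ u, ∑ v, (if G.Adj u v then ((G.degree u : ℝ)⁻¹ + (G.degree v : ℝ)⁻¹) / 2 else 0) =
      Fintype.card V := by
  have hsplit : ∀ u v, (if G.Adj u v then ((G.degree u : ℝ)⁻¹ + (G.degree v : ℝ)⁻¹) / 2 else 0) =
      ((if G.Adj u v then (G.degree u : ℝ)⁻¹ else 0) +
        if G.Adj v u then (G.degree v : ℝ)⁻¹ else 0) / 2 := fun u v => by
    rw [G.adj_comm v u]
    split_ifs <;> ring
  simp only [hsplit, ← sum_div, sum_add_distrib]
  rw [sum_comm (f := fun u v => if G.Adj v u then (G.degree v : ℝ)⁻¹ else 0),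
    sum_sum_ite_adj_inv_degree hpos]
  ring

lemma sum_sum_ite_adj_sqrt_mul_avg_inv_degree (hpos : ∀ v, 0 < G.degree v) :
    ∑ u, ∑ v, (if G.Adj u v then
      √(Fintype.card V - 2) * (((G.degree u : ℝ)⁻¹ + (G.degree v : ℝ)⁻¹) / 2) else 0) =
      Fintype.card V * √(Fintype.card V - 2) := by
  simp_rw [← mul_ite_zero, ← mul_sum, sum_sum_ite_adj_avg_inv_degree hpos, mul_comm]

lemma card_filter_eq_add_card_filter_eq {f : V → Fin 2} {u v : V} (h : f u ≠ f v) :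
    #{w | f w = f u} + #{w | f w = f v} = Fintype.card V := by
  have hcompl : univ.filter (f · = f v) = univ.filter (¬ f · = f u) := by
    ext w
    simp only [mem_filter, mem_univ, true_and]
    omega
  rw [hcompl, card_filter_add_card_filter_not, card_univ]

lemma Coloring.neighborFinset_subset_of_adj (C : G.Coloring (Fin 2)) {u v : V} (h : G.Adj u v) :
    G.neighborFinset u ⊆ univ.filter (C · = C v) := by
  intro w hw
  have := C.valid ((G.mem_neighborFinset u w).mp hw)
  have := C.valid h
  simp only [mem_filter, mem_univ, true_and]
  omega

lemma Colorable.degree_add_degree_le (hG : G.Colorable 2) {u v : V} (h : G.Adj u v) :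
    G.degree u + G.degree v ≤ Fintype.card V := by
  obtain ⟨C⟩ := hG
  rw [← card_filter_eq_add_card_filter_eq (C.valid h).symm, ← card_neighborFinset_eq_degree,
    ← card_neighborFinset_eq_degree]
  exact add_le_add (card_le_card (C.neighborFinset_subset_of_adj h))
    (card_le_card (C.neighborFinset_subset_of_adj h.symm))

lemma Colorable.abcWeight_le (hG : G.Colorable 2) (hpos : ∀ v, 0 < G.degree v) {u v : V}
    (h : G.Adj u v) :
    abcWeight (G.degree u) (G.degree v) ≤
      √(Fintype.card V - 2) * (((G.degree u : ℝ)⁻¹ + (G.degree v : ℝ)⁻¹) / 2) :=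
  _root_.abcWeight_le (Nat.one_le_cast.2 (hpos u)) (Nat.one_le_cast.2 (hpos v))
    (by exact_mod_cast hG.degree_add_degree_le h)

theorem Colorable.ABC_le (hG : G.Colorable 2) (hpos : ∀ v, 0 < G.degree v) :
    ABC G ≤ Fintype.card V / 2 * √(Fintype.card V - 2) := by
  rw [ABC_eq_sum_abcWeight, div_mul_eq_mul_div, ← sum_sum_ite_adj_sqrt_mul_avg_inv_degree hpos]
  gcongr with u _ v _
  split_ifs with h
  exacts [hG.abcWeight_le hpos h, le_rfl]

theorem Colorable.ABC_eq_iff (hG : G.Colorable 2) (hpos : ∀ v, 0 < G.degree v) :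
    ABC G = Fintype.card V / 2 * √(Fintype.card V - 2) ↔ ∀ v, 2 * G.degree v = Fintype.card V := by
  rw [ABC_eq_sum_abcWeight, div_mul_eq_mul_div, ← sum_sum_ite_adj_sqrt_mul_avg_inv_degree hpos,
    div_left_inj' two_ne_zero, sum_sum_ite_adj_eq_iff fun u v h => hG.abcWeight_le hpos h]
  have hiff : ∀ {u v}, G.Adj u v → (abcWeight (G.degree u) (G.degree v) =
      √(Fintype.card V - 2) * (((G.degree u : ℝ)⁻¹ + (G.degree v : ℝ)⁻¹) / 2) ↔
        G.degree u = G.degree v ∧ G.degree u + G.degree v = Fintype.card V) := fun h => by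
    rw [abcWeight_eq_iff (Nat.one_le_cast.2 (hpos _)) (Nat.one_le_cast.2 (hpos _))
      (by exact_mod_cast hG.degree_add_degree_le h)]
    norm_cast
  refine ⟨fun heq v => ?_, fun hdeg u v h => (hiff h).2 ?_⟩
  · obtain ⟨u, hu⟩ := (G.degree_pos_iff_exists_adj v).1 (hpos v)
    have := (hiff hu).1 (heq v u hu)
    omega
  · have := hdeg u
    have := hdeg v
    omega

section Regular

variable (hdeg : ∀ v, 2 * G.degree v = Fintype.card V)
include hdeg

lemma degree_pos_of_two_mul_degree_eq_card (v : V) : 0 < G.degree v := by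
  have := hdeg v
  have : 0 < Fintype.card V := Fintype.card_pos_iff.2 ⟨v⟩
  omega

lemma Coloring.neighborFinset_eq_of_two_mul_degree_eq_card (C : G.Coloring (Fin 2)) {u v : V}
    (h : G.Adj u v) : G.neighborFinset u = univ.filter (C · = C v) := by
  refine eq_of_subset_of_card_le (C.neighborFinset_subset_of_adj h) ?_
  have hsum := card_filter_eq_add_card_filter_eq (C.valid h)
  have hv := card_le_card (C.neighborFinset_subset_of_adj h.symm)
  rw [card_neighborFinset_eq_degree] at hv ⊢
  have := hdeg u
  have := hdeg v
  omega

lemma Coloring.adj_iff_ne_of_two_mul_degree_eq_card (C : G.Coloring (Fin 2)) (u v : V) :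
    G.Adj u v ↔ C u ≠ C v := by
  refine ⟨C.valid, fun hne => ?_⟩
  obtain ⟨x, hx⟩ := (G.degree_pos_iff_exists_adj u).1 (degree_pos_of_two_mul_degree_eq_card hdeg u)
  have := C.valid hx
  rw [← mem_neighborFinset, C.neighborFinset_eq_of_two_mul_degree_eq_card hdeg hx, mem_filter]
  exact ⟨mem_univ v, by omega⟩

lemma Coloring.card_fiber_of_two_mul_degree_eq_card (C : G.Coloring (Fin 2)) (i : Fin 2) :
    Nat.card {v // C v = i} = Fintype.card V / 2 := by
  rw [Nat.card_eq_fintype_card, Fintype.card_subtype]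
  rcases isEmpty_or_nonempty V with _ | ⟨⟨v⟩⟩
  · simp
  have hfiber : ∀ {u w}, G.Adj u w → #{x | C x = C w} = Fintype.card V / 2 := fun {u w} h => by
    rw [← C.neighborFinset_eq_of_two_mul_degree_eq_card hdeg h, card_neighborFinset_eq_degree]
    have := hdeg u
    omega
  obtain ⟨x, hx⟩ := (G.degree_pos_iff_exists_adj v).1 (degree_pos_of_two_mul_degree_eq_card hdeg v)
  have := C.valid hx
  obtain rfl | rfl : i = C v ∨ i = C x := by omega
  exacts [hfiber hx.symm, hfiber hx]

end Regular

lemma Iso.nonempty_of_adj_iff_ne {V W α : Type*} [Finite V] [Finite W] {G : SimpleGraph V}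
    {H : SimpleGraph W} {f : V → α} {g : W → α} (hG : ∀ u v, G.Adj u v ↔ f u ≠ f v)
    (hH : ∀ u v, H.Adj u v ↔ g u ≠ g v)
    (hcard : ∀ a, Nat.card {v // f v = a} = Nat.card {w // g w = a}) : Nonempty (G ≃g H) := by
  let e := Equiv.ofFiberEquiv fun a => (Finite.card_eq.1 (hcard a)).some
  refine ⟨⟨e, fun {u v} => ?_⟩⟩
  rw [hH, hG, Equiv.ofFiberEquiv_map (g := g), Equiv.ofFiberEquiv_map (g := g)]

theorem Coloring.nonempty_iso_of_two_mul_degree_eq_card {W : Type*} [Fintype W]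
    {H : SimpleGraph W} (C : G.Coloring (Fin 2)) (D : H.Coloring (Fin 2))
    (hG : ∀ v, 2 * G.degree v = Fintype.card V) (hH : ∀ w, 2 * H.degree w = Fintype.card W)
    (hVW : Fintype.card V = Fintype.card W) : Nonempty (G ≃g H) :=
  Iso.nonempty_of_adj_iff_ne (C.adj_iff_ne_of_two_mul_degree_eq_card hG)
    (D.adj_iff_ne_of_two_mul_degree_eq_card hH) fun i => by
      rw [C.card_fiber_of_two_mul_degree_eq_card hG, D.card_fiber_of_two_mul_degree_eq_card hH, hVW]

end SimpleGraph

def compBipartiteColoring (n m : ℕ) : (compBipartite n m).Coloring (Fin 2) :=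
  SimpleGraph.Coloring.mk (fun u => if u.val < m then 0 else 1) fun {u v} h => by
    simp only [compBipartite, ne_eq] at h
    split_ifs <;> simp_all

lemma two_mul_degree_compBipartite {n : ℕ} (hn : Even n) (u : Fin n) :
    2 * (compBipartite n (n / 2)).degree u = n := by
  obtain ⟨k, rfl⟩ := hn
  have hlt : #{x : Fin (k + k) | x < k} = k := by
    rw [Fin.card_filter_val_lt]
    omega
  have hle : #{x : Fin (k + k) | k ≤ x} = k := by
    have := card_filter_add_card_filter_not (s := univ) (fun x : Fin (k + k) => x < k)
    simp only [not_lt, card_univ, Fintype.card_fin, hlt] at this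
    omega
  rw [← card_neighborFinset_eq_degree, neighborFinset_eq_filter, show (k + k) / 2 = k by omega]
  by_cases hu : u.val < k <;> simp [compBipartite, hu, hlt, hle] <;> omega

theorem abc_max_chromatic_two_even {n : ℕ} (hn : 2 ≤ n) (heven : Even n)
    (G : SimpleGraph (Fin n)) (hconn : G.Connected)
    (hchi : G.chromaticNumber = 2) :
    ABC G ≤ ((n : ℝ) / 2) * Real.sqrt ((n : ℝ) - 2) ∧
    (ABC G = ((n : ℝ) / 2) * Real.sqrt ((n : ℝ) - 2) ↔
      Nonempty (G ≃g compBipartite n (n / 2))) := by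
  have hG : G.Colorable 2 := chromaticNumber_le_iff_colorable.1 hchi.le
  have : Nontrivial (Fin n) := Fin.nontrivial_iff_two_le.2 hn
  have hpos : ∀ v, 0 < G.degree v := fun v => hconn.preconnected.degree_pos_of_nontrivial v
  have hle := hG.ABC_le hpos
  have heq := hG.ABC_eq_iff hpos
  rw [Fintype.card_fin] at hle heq
  refine ⟨hle, heq.trans ⟨fun hdeg => ?_, fun ⟨e⟩ v => ?_⟩⟩
  · exact hG.some.nonempty_iso_of_two_mul_degree_eq_card (compBipartiteColoring n (n / 2))
      (by simpa using hdeg) (by simpa using two_mul_degree_compBipartite heven) (by simp)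
  · rw [← e.degree_eq]
    exact two_mul_degree_compBipartite heven (e v)
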